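/- Let Ω be a compact topological space, H a real Hilbert space, and Φ : Ω → H continuous. Let (x_n)_{n≥1} ⊆ Ω be a P-greedy sequence: with V_0 := {0} and V_n := span{Φ x_1, …, Φ x_n}, for every n ≥ 0 the point x_{n+1} satisfies dist(Φ x_{n+1}, V_n) = sup_{x ∈ Ω} dist(Φ x, V_n). Suppose there exist c > 0 and α > 0 such that for every n ≥ 1 there is a set Y_n ⊆ Ω of n points with sup_{x ∈ Ω} dist(Φ x, span{Φ y : y ∈ Y_n}) ≤ c n^{−α}. Then the P-greedy points satisfy sup_{x ∈ Ω} dist(Φ x, V_n) ≤ 2^{5α+1} c n^{−α} for all n ≥ 1. (With Φ x = K(·,x) for a kernel of finite smoothness β generating a Sobolev space, α = β/d − 1/2, this is the convergence rate ‖P_{V(X_n)}‖_{L∞(Ω)} ≤ ĉ₁ n^{−β/d + 1/2}, ĉ₁ = c·2^{5β/d − 3/2}, of the P-greedy algorithm.) -/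

import Mathlib

/-!
After projecting away the span `V_N` of the first `N` greedy points, the next `2m` residuals
`g_i` have norm at most `σ_N` (the current maximum of the Power Function) and lie within `ε` of
an `m`-dimensional space `U` (the projected span of a good `m`-point set). The product
`σ_N ⋯ σ_{N+2m-1}` is at most the product of the distances of the `g_i` to the span of their
predecessors, which is the absolute determinant of `(g_i)` in an orthonormal basis. Shrinking `U`
by the factor `ε / σ_N` multiplies this determinant by `(ε / σ_N)^{dim U}` and leaves every `g_i`
of norm at most `√2 ε`, so Hadamard's inequality gives `σ_N ⋯ σ_{N+2m-1} ≤ (2 σ_N ε)^m`. For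
`N = 2m` this yields `σ_{4m}^2 ≤ 2 σ_{2m} c m^{-α}`, which propagates the rate along powers of two.
-/

open Submodule InnerProductSpace Metric Module
open scoped RealInnerProductSpace

theorem Submodule.infDist_eq_norm_sub_starProjection {𝕜 F : Type*} [RCLike 𝕜]
    [NormedAddCommGroup F] [InnerProductSpace 𝕜 F]
    (K : Submodule 𝕜 F) [K.HasOrthogonalProjection] (x : F) :
    infDist x K = ‖x - K.starProjection x‖ := by
  rw [infDist_eq_iInf, starProjection_minimal]
  simp [dist_eq_norm]

theorem LipschitzWith.infDist_image_le {α β : Type*} [PseudoMetricSpace α] [PseudoMetricSpace β]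
    {f : α → β} (hf : LipschitzWith 1 f) (x : α) (s : Set α) :
    infDist (f x) (f '' s) ≤ infDist x s := by
  rcases s.eq_empty_or_nonempty with rfl | hs
  · simp
  refine (le_infDist hs).2 fun y hy => ?_
  calc infDist (f x) (f '' s) ≤ dist (f x) (f y) :=
        infDist_le_dist_of_mem (Set.mem_image_of_mem f hy)
    _ ≤ dist x y := by simpa using hf.dist_le_mul x y

theorem infDist_le_infDist_sub {R E : Type*} [Ring R] [SeminormedAddCommGroup E] [Module R E]
    {V S : Submodule R E} (hS : S ≤ V) {p : E} (hp : p ∈ V) (x : E) :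
    infDist x V ≤ infDist (x - p) S := by
  refine (le_infDist ⟨0, S.zero_mem⟩).2 fun y hy => ?_
  calc infDist x V ≤ dist x (p + y) := infDist_le_dist_of_mem (add_mem hp (hS hy))
    _ = dist (x - p) y := by rw [dist_eq_norm, dist_eq_norm, sub_sub]

section GramSchmidt

variable {F : Type*} [NormedAddCommGroup F] [InnerProductSpace ℝ F]
  {ι : Type*} [LinearOrder ι] [LocallyFiniteOrderBot ι] [WellFoundedLT ι]

namespace InnerProductSpace

theorem inner_gramSchmidt_self (v : ι → F) (i : ι) :
    ⟪gramSchmidt ℝ v i, v i⟫ = ‖gramSchmidt ℝ v i‖ ^ 2 := by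
  conv_lhs => rw [gramSchmidt_def'' ℝ v i]
  rw [inner_add_right, inner_sum, real_inner_self_eq_norm_sq, add_eq_left]
  refine Finset.sum_eq_zero fun k hk => ?_
  rw [real_inner_smul_right, gramSchmidt_orthogonal ℝ v (Finset.mem_Iio.mp hk).ne', mul_zero]

theorem norm_gramSchmidt_le (v : ι → F) (i : ι) : ‖gramSchmidt ℝ v i‖ ≤ ‖v i‖ := by
  have h := inner_gramSchmidt_self v i ▸ real_inner_le_norm (gramSchmidt ℝ v i) (v i)
  nlinarith [norm_nonneg (gramSchmidt ℝ v i), norm_nonneg (v i)]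

theorem infDist_le_norm_gramSchmidt (v : ι → F) (i : ι) :
    infDist (v i) (span ℝ (v '' Set.Iio i)) ≤ ‖gramSchmidt ℝ v i‖ := by
  have hmem : v i - gramSchmidt ℝ v i ∈ span ℝ (v '' Set.Iio i) := by
    rw [← span_gramSchmidt_Iio ℝ v i, gramSchmidt_def ℝ v i, sub_sub_cancel]
    refine Submodule.sum_mem _ fun k hk => ?_
    rw [starProjection_singleton]
    exact smul_mem _ _ (subset_span ⟨k, Finset.mem_Iio.mp hk, rfl⟩)
  simpa [dist_eq_norm] using infDist_le_dist_of_mem (x := v i) hmem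

end InnerProductSpace

namespace OrthonormalBasis

variable [Fintype ι] [FiniteDimensional ℝ F]

theorem abs_det_eq_prod_norm_gramSchmidt (b : OrthonormalBasis ι ℝ F) (v : ι → F) :
    |b.toBasis.det v| = ∏ i, ‖gramSchmidt ℝ v i‖ := by
  have hF : finrank ℝ F = Fintype.card ι := finrank_eq_card_basis b.toBasis
  set e := gramSchmidtOrthonormalBasis hF v
  have he : ∀ i, ⟪e i, v i⟫ = ‖gramSchmidt ℝ v i‖ := by
    intro i
    by_cases h : gramSchmidt ℝ v i = 0
    · rw [inner_gramSchmidtOrthonormalBasis_eq_zero hF (by simp [gramSchmidtNormed, h]), h,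
        norm_zero]
    · rw [gramSchmidtOrthonormalBasis_apply hF (by simpa [gramSchmidtNormed] using h),
        gramSchmidtNormed, real_inner_smul_left, inner_gramSchmidt_self]
      simp only [RCLike.ofReal_real_eq_id, id]
      field_simp
  have hchange : b.toBasis.det v = b.toBasis.det e * e.toBasis.det v := by
    conv_lhs => rw [b.toBasis.det.eq_smul_basis_det e.toBasis]
    simp
  rw [hchange, abs_mul, ← Real.norm_eq_abs (b.toBasis.det e), b.det_to_matrix_orthonormalBasis e,
    one_mul, gramSchmidtOrthonormalBasis_det, Finset.abs_prod]
  exact Finset.prod_congr rfl fun i _ => by rw [he, abs_norm]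

theorem abs_det_le_prod_norm (b : OrthonormalBasis ι ℝ F) (v : ι → F) :
    |b.toBasis.det v| ≤ ∏ i, ‖v i‖ :=
  b.abs_det_eq_prod_norm_gramSchmidt v ▸
    Finset.prod_le_prod (fun _ _ => norm_nonneg _) fun i _ => norm_gramSchmidt_le v i

theorem prod_infDist_le_abs_det (b : OrthonormalBasis ι ℝ F) (v : ι → F) :
    ∏ i, infDist (v i) (span ℝ (v '' Set.Iio i)) ≤ |b.toBasis.det v| :=
  b.abs_det_eq_prod_norm_gramSchmidt v ▸
    Finset.prod_le_prod (fun _ _ => infDist_nonneg) fun i _ => infDist_le_norm_gramSchmidt v i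

end OrthonormalBasis

end GramSchmidt

section OrthogonalScaling

variable {F : Type*} [NormedAddCommGroup F] [InnerProductSpace ℝ F] [FiniteDimensional ℝ F]
  (U : Submodule ℝ F)

/-- Multiplication by `μ` on `U` and the identity on `Uᗮ`. -/
noncomputable def orthogonalScaling (μ : ℝ) : F →ₗ[ℝ] F :=
  (U.prodEquivOfIsCompl Uᗮ U.isCompl_orthogonal).conj ((μ • LinearMap.id).prodMap LinearMap.id)

theorem det_orthogonalScaling (μ : ℝ) :
    LinearMap.det (orthogonalScaling U μ) = μ ^ finrank ℝ U := by
  rw [orthogonalScaling, LinearEquiv.conj_apply, LinearMap.comp_assoc, LinearMap.det_conj,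
    LinearMap.det_prodMap, LinearMap.det_smul, LinearMap.det_id, LinearMap.det_id, mul_one,
    mul_one]

theorem orthogonalScaling_apply (μ : ℝ) (x : F) :
    orthogonalScaling U μ x = μ • U.starProjection x + (x - U.starProjection x) := by
  simp only [orthogonalScaling, LinearEquiv.conj_apply_apply, LinearMap.prodMap_apply,
    prodEquivOfIsCompl_symm_apply, coe_prodEquivOfIsCompl', LinearMap.smul_apply,
    LinearMap.id_apply, coe_smul, coe_projectionOnto_apply]
  rw [projection_eq_self_sub_projection U.isCompl_orthogonal]
  rfl

theorem norm_orthogonalScaling_apply_sq_le (μ : ℝ) (x : F) :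
    ‖orthogonalScaling U μ x‖ ^ 2 ≤ μ ^ 2 * ‖x‖ ^ 2 + infDist x U ^ 2 := by
  have horth : ⟪μ • U.starProjection x, x - U.starProjection x⟫ = 0 :=
    inner_right_of_mem_orthogonal (U.smul_mem μ (U.starProjection_apply_mem x))
      (U.sub_starProjection_mem_orthogonal x)
  rw [orthogonalScaling_apply, norm_add_sq_real, horth, U.infDist_eq_norm_sub_starProjection,
    norm_smul, mul_pow, Real.norm_eq_abs, sq_abs, mul_zero, add_zero]
  gcongr
  exact U.norm_starProjection_apply_le x

end OrthogonalScaling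

section Volume

variable {F : Type*} [NormedAddCommGroup F] [InnerProductSpace ℝ F]
  {ι : Type*} [LinearOrder ι] [LocallyFiniteOrderBot ι] [WellFoundedLT ι] [Fintype ι]

theorem prod_infDist_le_of_finrank_eq [FiniteDimensional ℝ F] {k : ℕ}
    (hF : finrank ℝ F = Fintype.card ι) (v : ι → F) (U : Submodule ℝ F) (hU : finrank ℝ U ≤ k)
    {M ε : ℝ} (hε : 0 < ε) (hεM : ε ≤ M) (hvM : ∀ i, ‖v i‖ ≤ M)
    (hvU : ∀ i, infDist (v i) U ≤ ε) :
    ∏ i, infDist (v i) (span ℝ (v '' Set.Iio i)) ≤ (√2 * ε) ^ Fintype.card ι * (M / ε) ^ k := by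
  let b := (stdOrthonormalBasis ℝ F).reindex (Fintype.equivFinOfCardEq hF.symm).symm
  have hM : 0 < M := hε.trans_le hεM
  set T := orthogonalScaling U (ε / M)
  have hTv : ∀ i, ‖T (v i)‖ ≤ √2 * ε := by
    intro i
    have h2 : (√2 * ε) ^ 2 = (ε / M) ^ 2 * M ^ 2 + ε ^ 2 := by
      rw [mul_pow, Real.sq_sqrt zero_le_two]
      field_simp
      ring
    refine (pow_le_pow_iff_left₀ (norm_nonneg _) (by positivity) two_ne_zero).mp ?_
    calc ‖T (v i)‖ ^ 2 ≤ (ε / M) ^ 2 * ‖v i‖ ^ 2 + infDist (v i) U ^ 2 :=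
          norm_orthogonalScaling_apply_sq_le U _ _
      _ ≤ (ε / M) ^ 2 * M ^ 2 + ε ^ 2 := by
          gcongr
          exacts [hvM i, infDist_nonneg, hvU i]
      _ = (√2 * ε) ^ 2 := h2.symm
  have hdet : |b.toBasis.det v| = |b.toBasis.det (T ∘ v)| * (M / ε) ^ finrank ℝ U := by
    rw [Basis.det_comp, det_orthogonalScaling, abs_mul, abs_pow, abs_of_pos (div_pos hε hM),
      mul_right_comm, ← mul_pow, div_mul_div_comm, mul_comm ε M, div_self (by positivity),
      one_pow, one_mul]
  calc ∏ i, infDist (v i) (span ℝ (v '' Set.Iio i)) ≤ |b.toBasis.det v| :=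
        b.prod_infDist_le_abs_det v
    _ = |b.toBasis.det (T ∘ v)| * (M / ε) ^ finrank ℝ U := hdet
    _ ≤ (√2 * ε) ^ Fintype.card ι * (M / ε) ^ k := by
        gcongr
        · calc |b.toBasis.det (T ∘ v)| ≤ ∏ i, ‖T (v i)‖ := b.abs_det_le_prod_norm _
            _ ≤ ∏ _i : ι, √2 * ε :=
                Finset.prod_le_prod (fun _ _ => norm_nonneg _) fun i _ => hTv i
            _ = (√2 * ε) ^ Fintype.card ι := by rw [Finset.prod_const, Finset.card_univ]
        · exact (one_le_div hε).mpr hεM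

theorem prod_infDist_le {k : ℕ} (v : ι → F) (W : Submodule ℝ F) [FiniteDimensional ℝ W]
    (hW : finrank ℝ W ≤ k) {M ε : ℝ} (hε : 0 < ε) (hεM : ε ≤ M) (hvM : ∀ i, ‖v i‖ ≤ M)
    (hvW : ∀ i, infDist (v i) W ≤ ε) :
    ∏ i, infDist (v i) (span ℝ (v '' Set.Iio i)) ≤ (√2 * ε) ^ Fintype.card ι * (M / ε) ^ k := by
  by_cases hgs : ∃ i, gramSchmidt ℝ v i = 0
  · obtain ⟨i, hi⟩ := hgs
    have h0 : infDist (v i) (span ℝ (v '' Set.Iio i)) = 0 :=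
      le_antisymm (by simpa [hi] using infDist_le_norm_gramSchmidt v i) infDist_nonneg
    rw [Finset.prod_eq_zero (Finset.mem_univ i) h0]
    have : 0 ≤ M := hε.le.trans hεM
    positivity
  push Not at hgs
  -- Now `v` is linearly independent, so its span `E` has dimension `card ι`.
  set E := span ℝ (Set.range v) with hEdef
  have : FiniteDimensional ℝ E := FiniteDimensional.span_of_finite ℝ (Set.finite_range v)
  have hE : finrank ℝ E = Fintype.card ι := by
    rw [hEdef, ← span_gramSchmidt ℝ v, finrank_span_eq_card
      (linearIndependent_of_ne_zero_of_inner_eq_zero hgs fun i j hij =>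
        gramSchmidt_orthogonal ℝ v hij)]
  let v' : ι → E := fun i => ⟨v i, subset_span (Set.mem_range_self i)⟩
  have hv' : ∀ i, E.orthogonalProjectionOnto (v i) = v' i := fun i =>
    E.orthogonalProjectionOnto_mem_subspace_eq_self (v' i)
  have hspan : ∀ i, infDist (v' i) (span ℝ (v' '' Set.Iio i)) =
      infDist (v i) (span ℝ (v '' Set.Iio i)) := by
    intro i
    have himage : (span ℝ (v '' Set.Iio i) : Set F) =
        E.subtypeₗᵢ '' span ℝ (v' '' Set.Iio i) := by
      rw [Submodule.coe_subtypeₗᵢ, ← map_coe, ← span_image, ← Set.image_comp]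
      rfl
    rw [himage]
    exact (infDist_image E.subtypeₗᵢ.isometry).symm
  set U : Submodule ℝ E := W.map (E.orthogonalProjectionOnto : F →ₗ[ℝ] E)
  have hvU : ∀ i, infDist (v' i) U ≤ ε := by
    intro i
    have h := E.lipschitzWith_orthogonalProjectionOnto.infDist_image_le (v i) W
    rw [hv'] at h
    exact h.trans (hvW i)
  simp_rw [← hspan]
  exact prod_infDist_le_of_finrank_eq hE v' _ ((finrank_map_le _ W).trans hW) hε hεM hvM hvU

end Volume

section Greedy

variable {H : Type*} [NormedAddCommGroup H] [InnerProductSpace ℝ H]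

theorem monotone_span_image_Iio (f : ℕ → H) : Monotone fun n => span ℝ (f '' Set.Iio n) :=
  fun _ _ hab => span_mono (Set.image_mono (Set.Iio_subset_Iio hab))

theorem infDist_span_Iio_le_of_sub_mem (f : ℕ → H) (N : ℕ) {n : ℕ} (g : Fin n → H)
    (hg : ∀ j : Fin n, f (N + j) - g j ∈ span ℝ (f '' Set.Iio N)) (i : Fin n) :
    infDist (f (N + i)) (span ℝ (f '' Set.Iio (N + i))) ≤
      infDist (g i) (span ℝ (g '' Set.Iio i)) := by
  have hN : span ℝ (f '' Set.Iio N) ≤ span ℝ (f '' Set.Iio (N + i)) :=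
    monotone_span_image_Iio f (Nat.le_add_right N i)
  have hsub : span ℝ (g '' Set.Iio i) ≤ span ℝ (f '' Set.Iio (N + i)) := by
    rw [span_le]
    rintro _ ⟨j, hj, rfl⟩
    rw [← sub_sub_cancel (f (N + j)) (g j)]
    exact sub_mem (subset_span ⟨N + j, by simpa using hj, rfl⟩) (hN (hg j))
  simpa using infDist_le_infDist_sub hsub (hN (hg i)) (f (N + i))

variable {f : ℕ → H}
  (hmax : ∀ N i, infDist (f i) (span ℝ (f '' Set.Iio N)) ≤ infDist (f N) (span ℝ (f '' Set.Iio N)))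
include hmax

theorem antitone_infDist_of_greedy : Antitone fun n => infDist (f n) (span ℝ (f '' Set.Iio n)) :=
  fun a b hab =>
    (infDist_le_infDist_of_subset (monotone_span_image_Iio f hab) ⟨0, zero_mem _⟩).trans
      (hmax a b)

theorem prod_infDist_greedy_le {m : ℕ} (W : Submodule ℝ H) [FiniteDimensional ℝ W]
    (hW : finrank ℝ W ≤ m) {ε : ℝ} (hε : 0 < ε) (hfW : ∀ i, infDist (f i) W ≤ ε) (N : ℕ) :
    ∏ i ∈ Finset.range (2 * m), infDist (f (N + i)) (span ℝ (f '' Set.Iio (N + i)))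
      ≤ (2 * infDist (f N) (span ℝ (f '' Set.Iio N)) * ε) ^ m := by
  set σ := fun n => infDist (f n) (span ℝ (f '' Set.Iio n))
  change ∏ i ∈ Finset.range (2 * m), σ (N + i) ≤ (2 * σ N * ε) ^ m
  by_cases hsmall : σ N < ε
  · calc ∏ i ∈ Finset.range (2 * m), σ (N + i) ≤ ∏ _i ∈ Finset.range (2 * m), σ N :=
          Finset.prod_le_prod (fun _ _ => infDist_nonneg) fun i _ =>
            antitone_infDist_of_greedy hmax (Nat.le_add_right N i)
      _ = σ N ^ (2 * m) := by rw [Finset.prod_const, Finset.card_range]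
      _ ≤ (2 * σ N * ε) ^ m := by
          rw [pow_mul]
          gcongr
          nlinarith [show 0 ≤ σ N from infDist_nonneg]
  push Not at hsmall
  set K := span ℝ (f '' Set.Iio N)
  have : FiniteDimensional ℝ K := FiniteDimensional.span_of_finite ℝ ((Set.finite_Iio N).image f)
  let g : Fin (2 * m) → H := fun i => Kᗮ.starProjection (f (N + i))
  have hg : ∀ i, g i = f (N + i) - K.starProjection (f (N + i)) := fun i =>
    K.starProjection_orthogonal_val _
  have hfg : ∀ i : Fin (2 * m), f (N + i) - g i ∈ K := fun i => by
    rw [hg, sub_sub_cancel]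
    exact K.starProjection_apply_mem _
  have hgσ : ∀ i, ‖g i‖ ≤ σ N := fun i => by
    rw [hg, ← K.infDist_eq_norm_sub_starProjection]
    exact hmax N (N + i)
  have hgW : ∀ i, infDist (g i) (W.map (Kᗮ.starProjection : H →ₗ[ℝ] H)) ≤ ε := fun i =>
    (Kᗮ.lipschitzWith_starProjection.infDist_image_le _ _).trans (hfW _)
  calc ∏ i ∈ Finset.range (2 * m), σ (N + i) = ∏ i : Fin (2 * m), σ (N + i) :=
        (Fin.prod_univ_eq_prod_range _ _).symm
    _ ≤ ∏ i, infDist (g i) (span ℝ (g '' Set.Iio i)) :=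
        Finset.prod_le_prod (fun _ _ => infDist_nonneg) fun i _ =>
          infDist_span_Iio_le_of_sub_mem f N g hfg i
    _ ≤ (√2 * ε) ^ Fintype.card (Fin (2 * m)) * (σ N / ε) ^ m :=
        prod_infDist_le g _ ((finrank_map_le _ W).trans hW) hε hsmall hgσ hgW
    _ = (2 * σ N * ε) ^ m := by
        rw [Fintype.card_fin, pow_mul, mul_pow, Real.sq_sqrt zero_le_two, ← mul_pow]
        congr 1
        field_simp

end Greedy

section Rate

variable {σ : ℕ → ℝ} (hσ : Antitone σ) (hσ0 : ∀ n, 0 ≤ σ n)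
include hσ hσ0

theorem sq_le_of_prod_range_le {m N : ℕ} (hm : m ≠ 0) {B : ℝ} (hB : 0 ≤ B)
    (h : ∏ i ∈ Finset.range (2 * m), σ (N + i) ≤ B ^ m) : σ (N + 2 * m) ^ 2 ≤ B := by
  refine (pow_le_pow_iff_left₀ (sq_nonneg _) hB hm).mp ?_
  calc (σ (N + 2 * m) ^ 2) ^ m = ∏ _i ∈ Finset.range (2 * m), σ (N + 2 * m) := by
        rw [Finset.prod_const, Finset.card_range, ← pow_mul, mul_comm]
    _ ≤ ∏ i ∈ Finset.range (2 * m), σ (N + i) :=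
        Finset.prod_le_prod (fun _ _ => hσ0 _) fun i hi =>
          hσ (by linarith [Finset.mem_range.mp hi])
    _ ≤ B ^ m := h

theorem le_div_pow_of_sq_le {r c : ℝ} (hr : 1 ≤ r) (hc : 0 ≤ c) (h₁ : σ 1 ≤ 2 * c)
    (hrec : ∀ k, σ (2 ^ (k + 2)) ^ 2 ≤ 2 * σ (2 ^ (k + 1)) * (c / r ^ k)) (k : ℕ) :
    σ (2 ^ k) ≤ 2 * r ^ 3 * c / r ^ k := by
  induction k using Nat.twoStepInduction with
  | zero =>
    calc σ (2 ^ 0) ≤ 2 * c := by simpa using h₁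
      _ ≤ 2 * r ^ 3 * c / r ^ 0 := by
        rw [pow_zero, div_one, mul_right_comm]
        exact le_mul_of_one_le_right (by positivity) (one_le_pow₀ hr)
  | one =>
    calc σ (2 ^ 1) ≤ σ 1 := hσ (by norm_num)
      _ ≤ 2 * c := h₁
      _ ≤ 2 * r ^ 3 * c / r ^ 1 := by
        rw [pow_one, show 2 * r ^ 3 * c / r = 2 * c * r ^ 2 by field_simp]
        exact le_mul_of_one_le_right (by positivity) (one_le_pow₀ hr)
  | more k _ ih =>
    refine (pow_le_pow_iff_left₀ (hσ0 _) (by positivity) two_ne_zero).mp ?_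
    calc σ (2 ^ (k + 2)) ^ 2 ≤ 2 * σ (2 ^ (k + 1)) * (c / r ^ k) := hrec k
      _ ≤ 2 * (2 * r ^ 3 * c / r ^ (k + 1)) * (c / r ^ k) := by gcongr
      _ = (2 * r ^ 3 * c / r ^ (k + 2)) ^ 2 := by field_simp; ring

theorem le_rpow_of_prod_range_le {c α : ℝ} (hc : 0 ≤ c) (hα : 0 ≤ α)
    (h : ∀ m N : ℕ, 1 ≤ m →
      ∏ i ∈ Finset.range (2 * m), σ (N + i) ≤ (2 * σ N * (c * (m : ℝ) ^ (-α))) ^ m)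
    {n : ℕ} (hn : 1 ≤ n) : σ n ≤ 2 ^ (5 * α + 1) * c * (n : ℝ) ^ (-α) := by
  set r : ℝ := 2 ^ α
  have hr : 1 ≤ r := Real.one_le_rpow one_le_two hα
  have hpow : ∀ k : ℕ, ((2 ^ k : ℕ) : ℝ) ^ (-α) = 1 / r ^ k := fun k => by
    rw [Nat.cast_pow, Nat.cast_ofNat, Real.rpow_neg (by positivity),
      ← Real.rpow_pow_comm zero_le_two, one_div]
  have h₁ : σ 1 ≤ 2 * c := by
    have h01 : σ 0 * σ 1 ≤ 2 * (σ 0 * c) := by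
      simpa [Finset.prod_range_succ, mul_assoc] using h 1 0 le_rfl
    rcases (hσ0 0).eq_or_lt with h0 | h0
    · linarith [hσ (Nat.zero_le 1)]
    · exact le_of_mul_le_mul_left (by linarith) h0
  have hrec : ∀ k, σ (2 ^ (k + 2)) ^ 2 ≤ 2 * σ (2 ^ (k + 1)) * (c / r ^ k) := fun k => by
    have hk := sq_le_of_prod_range_le hσ hσ0 (N := 2 ^ (k + 1)) (by positivity)
      (mul_nonneg (mul_nonneg zero_le_two (hσ0 _)) (by positivity)) (h (2 ^ k) _ Nat.one_le_two_pow)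
    rwa [hpow, ← mul_div_assoc, mul_one, show 2 ^ (k + 1) + 2 * 2 ^ k = 2 ^ (k + 2) by ring]
      at hk
  set k := Nat.log 2 n
  have hn0 : (0 : ℝ) < n := by exact_mod_cast hn
  calc σ n ≤ σ (2 ^ k) := hσ (Nat.pow_log_le_self 2 (by omega))
    _ ≤ 2 * r ^ 3 * c / r ^ k := le_div_pow_of_sq_le hσ hσ0 hr hc h₁ hrec k
    _ = 2 * r ^ 4 * c * (1 / r ^ (k + 1)) := by field_simp; ring
    _ ≤ 2 * r ^ 5 * c * (n : ℝ) ^ (-α) := by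
        rw [← hpow]
        gcongr 2 * ?_ * c * ?_
        · exact pow_le_pow_right₀ hr (by norm_num)
        · exact Real.rpow_le_rpow_of_nonpos hn0
            (by exact_mod_cast (Nat.lt_pow_succ_log_self one_lt_two n).le) (neg_nonpos.mpr hα)
    _ = 2 ^ (5 * α + 1) * c * (n : ℝ) ^ (-α) := by
        rw [Real.rpow_add two_pos, Real.rpow_one, mul_comm 5 α, Real.rpow_mul zero_le_two]
        norm_cast
        ring

end Rate

theorem pgreedy_polynomial_rate_general
    {H : Type*} [NormedAddCommGroup H] [InnerProductSpace ℝ H]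
    {Ω : Type*} [TopologicalSpace Ω] [CompactSpace Ω]
    (Φ : Ω → H) (hΦ : Continuous Φ)
    (x : ℕ → Ω) (V : ℕ → Submodule ℝ H)
    (hV : ∀ n, V n = Submodule.span ℝ ((Φ ∘ x) '' Set.Iio n))
    (hgreedy : ∀ n, Metric.infDist (Φ (x n)) ((V n : Set H))
      = ⨆ y : Ω, Metric.infDist (Φ y) ((V n : Set H)))
    (c α : ℝ) (hc : 0 < c) (hα : 0 < α)
    (hY : ∀ n : ℕ, 1 ≤ n → ∃ Y : Finset Ω, Y.card = n ∧
      ∀ z : Ω, Metric.infDist (Φ z)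
        ((Submodule.span ℝ (Φ '' (Y : Set Ω))) : Set H) ≤ c * (n : ℝ) ^ (-α)) :
    ∀ n : ℕ, 1 ≤ n →
      (⨆ z : Ω, Metric.infDist (Φ z) ((V n : Set H)))
        ≤ 2 ^ (5 * α + 1) * c * (n : ℝ) ^ (-α) := by
  classical
  obtain rfl : V = fun n => span ℝ ((Φ ∘ x) '' Set.Iio n) := funext hV
  have hmax : ∀ N i, infDist ((Φ ∘ x) i) (span ℝ ((Φ ∘ x) '' Set.Iio N))
      ≤ infDist ((Φ ∘ x) N) (span ℝ ((Φ ∘ x) '' Set.Iio N)) := fun N i =>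
    (hgreedy N).symm ▸ le_ciSup (isCompact_range ((continuous_infDist_pt _).comp hΦ)).bddAbove (x i)
  intro n hn
  rw [← hgreedy n]
  refine le_rpow_of_prod_range_le (antitone_infDist_of_greedy hmax) (fun _ => infDist_nonneg)
    hc.le hα.le (fun m N hm => ?_) hn
  obtain ⟨Y, hYcard, hYdist⟩ := hY m hm
  have : FiniteDimensional ℝ (span ℝ (Φ '' Y)) :=
    FiniteDimensional.span_of_finite ℝ (Y.finite_toSet.image Φ)
  have hYrank : finrank ℝ (span ℝ (Φ '' Y)) ≤ m := by
    rw [← Finset.coe_image, ← hYcard]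
    exact (finrank_span_finset_le_card _).trans Finset.card_image_le
  exact prod_infDist_greedy_le hmax _ hYrank (by positivity) (fun i => hYdist (x i)) N

/-- Convergence rate of the P-greedy algorithm for kernels of finite smoothness
(Theorem `th:final_bound` (a) in abstract form): if `Ω` is compact, `Φ : Ω → H`
continuous, `(x_n)` a P-greedy sequence (each new point maximizes the current
Power Function `x ↦ dist(Φ x, V_n)`, where `V n = span{Φ x_1, …, Φ x_n}` and
`x n` plays the role of `x_{n+1}`), and for every `n ≥ 1` some `n`-point set
`Y_n ⊆ Ω` achieves `sup_{x ∈ Ω} dist(Φ x, span{Φ y : y ∈ Y_n}) ≤ c n^{−α}`,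
then `sup_{x ∈ Ω} dist(Φ x, V_n) ≤ 2^{5α+1} c n^{−α}` for all `n ≥ 1`. -/
theorem pgreedy_polynomial_rate
    {H : Type*} [NormedAddCommGroup H] [InnerProductSpace ℝ H] [CompleteSpace H]
    {Ω : Type*} [TopologicalSpace Ω] [CompactSpace Ω]
    (Φ : Ω → H) (hΦ : Continuous Φ)
    (x : ℕ → Ω) (V : ℕ → Submodule ℝ H)
    (hV : ∀ n, V n = Submodule.span ℝ ((Φ ∘ x) '' Set.Iio n))
    (hgreedy : ∀ n, Metric.infDist (Φ (x n)) ((V n : Set H))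
      = ⨆ y : Ω, Metric.infDist (Φ y) ((V n : Set H)))
    (c α : ℝ) (hc : 0 < c) (hα : 0 < α)
    (hY : ∀ n : ℕ, 1 ≤ n → ∃ Y : Finset Ω, Y.card = n ∧
      ∀ z : Ω, Metric.infDist (Φ z)
        ((Submodule.span ℝ (Φ '' (Y : Set Ω))) : Set H) ≤ c * (n : ℝ) ^ (-α)) :
    ∀ n : ℕ, 1 ≤ n →
      (⨆ z : Ω, Metric.infDist (Φ z) ((V n : Set H)))
        ≤ 2 ^ (5 * α + 1) * c * (n : ℝ) ^ (-α) :=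
  pgreedy_polynomial_rate_general Φ hΦ x V hV hgreedy c α hc hα hY
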